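/- arXiv:math/0501381 — 6 statements merged into one kernel-verified Lean document; each statement's English description precedes it below -/
import Mathlib

section
/- Let f: ℤ² → ℂ be a discrete conformal map, i.e., the cross-ratio of every elementary quadrilateral equals -1: ((f(n,m)-f(n+1,m))(f(n+1,m+1)-f(n,m+1)))/((f(n+1,m)-f(n+1,m+1))(f(n,m+1)-f(n,m))) = -1, with all edge differences nonzero. Define g on edges by g_x(n,m) = -1/(f(n+1,m)-f(n,m)) and g_y(n,m) = 1/(f(n,m+1)-f(n,m)). Then g_x and g_y are the x- and y-edge differences of a well-defined function f*: ℤ² → ℂ, i.e., g_x(n,m) + g_y(n+1,m) = g_y(n,m) + g_x(n,m+1) for all (n,m), and f* is also a discrete conformal map. -/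
/-- A map `f : ℤ² → ℂ` is discrete conformal: all elementary quadrilaterals
have cross-ratio `-1`. -/
def DiscreteConformal (f : ℤ → ℤ → ℂ) : Prop :=
  ∀ n m : ℤ,
    ((f n m - f (n + 1) m) * (f (n + 1) (m + 1) - f n (m + 1))) /
      ((f (n + 1) m - f (n + 1) (m + 1)) * (f n (m + 1) - f n m)) = -1

/-!
Let `u, v, w, t` be the edges `b - a, c - b, c - d, d - a` of a quadrilateral `a b c d`, so that
`u + v = t + w`; the cross-ratio condition says `u w = -v t`. Clearing denominators, these two
relations give `-1/u + 1/v = 1/t - 1/w`, so the dual edges form a closed discrete `1`-form and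
integrate to `f*` on `ℤ²`. The dual relation `(1/u) (1/w) = -(1/v) (1/t)` is `u w = -v t` inverted,
so `f*` is again discrete conformal.
-/

section Potential

variable {G : Type*} [AddCommGroup G]

theorem exists_forall_add_one_sub_eq (h : ℤ → G) : ∃ F : ℤ → G, ∀ k, F (k + 1) - F k = h k := by
  refine ⟨fun k => ∑ i ∈ Finset.Ico 0 k, h i - ∑ i ∈ Finset.Ico k 0, h i, fun k => ?_⟩
  dsimp only
  rcases le_or_gt 0 k with hk | hk
  · rw [← Order.succ_eq_add_one, ← Finset.insert_Ico_right_eq_Ico_succ hk,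
      Finset.sum_insert Finset.right_notMem_Ico, Finset.Ico_eq_empty_of_le hk,
      Finset.Ico_eq_empty_of_le (hk.trans (Order.le_succ k))]
    abel
  · rw [← Order.succ_eq_add_one, ← Finset.insert_Ico_succ_left_eq_Ico hk,
      Finset.sum_insert (by simp), Finset.Ico_eq_empty_of_le hk.le,
      Finset.Ico_eq_empty_of_le (Order.succ_le_of_lt hk)]
    abel

theorem exists_potential_of_closed (gx gy : ℤ → ℤ → G)
    (hclosed : ∀ n m, gx n m + gy (n + 1) m = gy n m + gx n (m + 1)) :
    ∃ F : ℤ → ℤ → G,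
      (∀ n m, F (n + 1) m - F n m = gx n m) ∧ (∀ n m, F n (m + 1) - F n m = gy n m) := by
  obtain ⟨X, hX⟩ := exists_forall_add_one_sub_eq (gx · 0)
  choose Y hY using fun n => exists_forall_add_one_sub_eq (gy n)
  refine ⟨fun n m => X n + (Y n m - Y n 0), fun n m => ?_, fun n m => ?_⟩
  · dsimp only
    induction m using Int.induction_on with
    | zero => simpa using hX n
    | succ k ih =>
      linear_combination (norm := abel) ih + hY (n + 1) k - hY n k + hclosed n k
    | pred k ih =>
      have hclosed' := hclosed n (-k - 1)
      have hY₁ := hY (n + 1) (-k - 1)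
      have hY₀ := hY n (-k - 1)
      rw [sub_add_cancel] at hclosed' hY₁ hY₀
      linear_combination (norm := abel) ih - hY₁ + hY₀ - hclosed'
  · simpa using hY n m

end Potential

section CrossRatio

variable {K : Type*} [Field K]

def crossRatio (a b c d : K) : K := (a - b) * (c - d) / ((b - c) * (d - a))

theorem discreteConformal_iff {f : ℤ → ℤ → ℂ} :
    DiscreteConformal f ↔
      ∀ n m, crossRatio (f n m) (f (n + 1) m) (f (n + 1) (m + 1)) (f n (m + 1)) = -1 :=
  Iff.rfl

variable {a b c d : K}

theorem crossRatio_eq_neg_one_iff (hcb : c - b ≠ 0) (hda : d - a ≠ 0) :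
    crossRatio a b c d = -1 ↔ (b - a) * (c - d) = -((c - b) * (d - a)) := by
  have hbc : b - c ≠ 0 := by rwa [← neg_sub, neg_ne_zero]
  rw [crossRatio, div_eq_iff (mul_ne_zero hbc hda)]
  constructor <;> intro h <;> linear_combination -h

theorem dual_edges_closed_of_crossRatio_eq_neg_one (hq : crossRatio a b c d = -1)
    (hba : b - a ≠ 0) (hcb : c - b ≠ 0) (hcd : c - d ≠ 0) (hda : d - a ≠ 0) :
    -(1 / (b - a)) + 1 / (c - b) = 1 / (d - a) + -(1 / (c - d)) := by
  have hprod := (crossRatio_eq_neg_one_iff hcb hda).1 hq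
  field_simp
  linear_combination (d - a - (c - b)) * hprod

theorem crossRatio_dual_eq_neg_one (hq : crossRatio a b c d = -1)
    (hba : b - a ≠ 0) (hcb : c - b ≠ 0) (hcd : c - d ≠ 0) (hda : d - a ≠ 0) {a' b' c' d' : K}
    (hab' : b' - a' = -(1 / (b - a))) (hcb' : c' - b' = 1 / (c - b))
    (hcd' : c' - d' = -(1 / (c - d))) (hda' : d' - a' = 1 / (d - a)) :
    crossRatio a' b' c' d' = -1 := by
  have hprod := (crossRatio_eq_neg_one_iff hcb hda).1 hq
  rw [crossRatio_eq_neg_one_iff (hcb' ▸ one_div_ne_zero hcb) (hda' ▸ one_div_ne_zero hda),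
    hab', hcb', hcd', hda']
  field_simp
  linear_combination hprod

end CrossRatio

/-- The dual edge data of a discrete conformal map close up to a well-defined
map `f*`, which is again discrete conformal. -/
theorem stmt3 (f : ℤ → ℤ → ℂ) (hf : DiscreteConformal f)
    (hx : ∀ n m : ℤ, f (n + 1) m - f n m ≠ 0)
    (hy : ∀ n m : ℤ, f n (m + 1) - f n m ≠ 0)
    (gx gy : ℤ → ℤ → ℂ)
    (hgx : ∀ n m : ℤ, gx n m = -(1 / (f (n + 1) m - f n m)))
    (hgy : ∀ n m : ℤ, gy n m = 1 / (f n (m + 1) - f n m)) :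
    (∀ n m : ℤ, gx n m + gy (n + 1) m = gy n m + gx n (m + 1)) ∧
    ∃ fs : ℤ → ℤ → ℂ,
      (∀ n m : ℤ, fs (n + 1) m - fs n m = gx n m) ∧
      (∀ n m : ℤ, fs n (m + 1) - fs n m = gy n m) ∧
      DiscreteConformal fs := by
  rw [discreteConformal_iff] at hf
  have hclosed : ∀ n m, gx n m + gy (n + 1) m = gy n m + gx n (m + 1) := fun n m => by
    rw [hgx, hgx, hgy, hgy]
    exact dual_edges_closed_of_crossRatio_eq_neg_one (hf n m)
      (hx n m) (hy (n + 1) m) (hx n (m + 1)) (hy n m)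
  obtain ⟨fs, hfsx, hfsy⟩ := exists_potential_of_closed gx gy hclosed
  refine ⟨hclosed, fs, hfsx, hfsy, discreteConformal_iff.2 fun n m =>
    crossRatio_dual_eq_neg_one (hf n m) (hx n m) (hy (n + 1) m) (hx n (m + 1)) (hy n m)
      ((hfsx n m).trans (hgx n m)) ((hfsy (n + 1) m).trans (hgy (n + 1) m))
      ((hfsx n (m + 1)).trans (hgx n (m + 1))) ((hfsy n m).trans (hgy n m))⟩
end

section
/- Let c ∈ (1,2] and let R be a positive function on the lattice quadrant 𝕍 = {N+iM : M ≥ |N|} satisfying R(z)² ≤ R(z+1)R(z+i), R(z)² ≥ R(z+1)R(z-i), R(z+1+i)² ≥ R(z+1)R(z+i), R(z+i)² ≥ R(z)R(z+1+i), and R(z+1)² ≤ R(z)R(z+1+i) wherever defined. Define X(N,M) by (1+X)/(1-X) = R(N+1,M)/R(N,M) and Y(N,M) by (1+Y)/(1-Y) = R(N,M)/R(N,M-1). Then X(N,M) + Y(N,M+1) ≥ 0 and Y(N,M+1) ≥ X(N,M+1) at all interior points. -/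
/-- Lemma 1, first estimates: from the five radius inequalities one gets
`X(N,M) + Y(N,M+1) ≥ 0` and `Y(N,M+1) ≥ X(N,M+1)` at interior points of the
quadrant `𝕍 = {(N,M) : M ≥ |N|}`. -/
theorem stmt5 (c : ℝ) (hc1 : 1 < c) (hc2 : c ≤ 2)
    (R : ℤ → ℤ → ℝ)
    (hpos : ∀ N M : ℤ, |N| ≤ M → 0 < R N M)
    (h1 : ∀ N M : ℤ, |N| ≤ M → R N M ^ 2 ≤ R (N + 1) M * R N (M + 1))
    (h2 : ∀ N M : ℤ, |N| ≤ M - 1 → R N M ^ 2 ≥ R (N + 1) M * R N (M - 1))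
    (h3 : ∀ N M : ℤ, |N| ≤ M → R (N + 1) (M + 1) ^ 2 ≥ R (N + 1) M * R N (M + 1))
    (h4 : ∀ N M : ℤ, |N| ≤ M → R N (M + 1) ^ 2 ≥ R N M * R (N + 1) (M + 1))
    (h5 : ∀ N M : ℤ, |N| ≤ M → R (N + 1) M ^ 2 ≤ R N M * R (N + 1) (M + 1))
    (X Y : ℤ → ℤ → ℝ)
    (hXrange : ∀ N M : ℤ, -1 < X N M ∧ X N M < 1)
    (hYrange : ∀ N M : ℤ, -1 < Y N M ∧ Y N M < 1)
    (hX : ∀ N M : ℤ, |N| ≤ M → (1 + X N M) / (1 - X N M) = R (N + 1) M / R N M)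
    (hY : ∀ N M : ℤ, |N| ≤ M - 1 → (1 + Y N M) / (1 - Y N M) = R N M / R N (M - 1)) :
    ∀ N M : ℤ, |N| < M →
      0 ≤ X N M + Y N (M + 1) ∧ X N (M + 1) ≤ Y N (M + 1) := by
  intro N M hNM
  have hM : |N| ≤ M := hNM.le
  have hN1 : |N + 1| ≤ M := by
    calc |N + 1| ≤ |N| + |(1 : ℤ)| := abs_add_le _ _
      _ ≤ M := by simp; linarith
  have hN1' : |N + 1| ≤ M + 1 := by linarith
  have hMM1 : |N| ≤ M + 1 := by linarith
  set p := R (N + 1) M with hpdef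
  set q := R N M with hqdef
  set r := R N (M + 1) with hrdef
  set s := R (N + 1) (M + 1) with hsdef
  have hq : 0 < q := hpos N M hM
  have hp : 0 < p := hpos _ _ hN1
  have hr : 0 < r := hpos _ _ hMM1
  have hs : 0 < s := hpos _ _ hN1'
  obtain ⟨hu1, hu2⟩ := hXrange N M
  obtain ⟨hu'1, hu'2⟩ := hXrange N (M + 1)
  obtain ⟨hv1, hv2⟩ := hYrange N (M + 1)
  have hu := hX N M hM
  have hu' := hX N (M + 1) hMM1
  have hv := hY N (M + 1) (by simpa using hM)
  rw [show M + 1 - 1 = M from by ring] at hv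
  rw [div_eq_div_iff (by linarith) hq.ne'] at hu
  rw [div_eq_div_iff (by linarith) hr.ne'] at hu'
  rw [div_eq_div_iff (by linarith) hq.ne'] at hv
  have eu : X N M * (p + q) = p - q := by nlinarith [hu]
  have eu' : X N (M + 1) * (s + r) = s - r := by nlinarith [hu']
  have ev : Y N (M + 1) * (r + q) = r - q := by nlinarith [hv]
  have h1' : q ^ 2 ≤ p * r := h1 N M hM
  have h4' : q * s ≤ r ^ 2 := h4 N M hM
  have hpq : 0 < p + q := by linarith
  have hrq : 0 < r + q := by linarith
  have hsr : 0 < s + r := by linarith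
  constructor
  · have key : (X N M + Y N (M + 1)) * ((p + q) * (r + q)) = 2 * (p * r - q ^ 2) := by
      linear_combination (r + q) * eu + (p + q) * ev
    nlinarith [key, h1', mul_pos hpq hrq]
  · have key : (Y N (M + 1) - X N (M + 1)) * ((r + q) * (s + r)) = 2 * (r ^ 2 - q * s) := by
      linear_combination (s + r) * ev - (r + q) * eu'
    nlinarith [key, h4', mul_pos hrq hsr]
end

section
/- Let c ∈ (1,2), M > N ≥ 0, and suppose positive reals R₁, R₂, R₃, R₄ satisfy R₁R₂(-2M-c) + R₂R₃(2(N+1)-c) + R₃R₄(2(M+1)-c) + R₄R₁(-2N-c) = 0 and R₃ ≥ R₁. Then R₂/R₄ ≥ (1 - (c-1)/(M-N))/(1 + (c-1)/(M-N)). -/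
/-- From equation (square) and `R₃ ≥ R₁` one estimates the ratio `R₂/R₄` from
below. -/
theorem stmt6 (c : ℝ) (hc1 : 1 < c) (hc2 : c < 2)
    (N M : ℤ) (hN : 0 ≤ N) (hNM : N < M)
    (R₁ R₂ R₃ R₄ : ℝ)
    (h₁ : 0 < R₁) (h₂ : 0 < R₂) (h₃ : 0 < R₃) (h₄ : 0 < R₄)
    (hsq : R₁ * R₂ * (-2 * (M : ℝ) - c) + R₂ * R₃ * (2 * ((N : ℝ) + 1) - c)
        + R₃ * R₄ * (2 * ((M : ℝ) + 1) - c) + R₄ * R₁ * (-2 * (N : ℝ) - c) = 0)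
    (h31 : R₁ ≤ R₃) :
    (1 - (c - 1) / ((M : ℝ) - N)) / (1 + (c - 1) / ((M : ℝ) - N)) ≤ R₂ / R₄ := by
  have hd : (1:ℝ) ≤ (M:ℝ) - N := by
    have h' : N + 1 ≤ M := hNM
    have : ((N:ℝ) + 1) ≤ (M:ℝ) := by exact_mod_cast h'
    linarith
  have hN0 : (0:ℝ) ≤ (N:ℝ) := by exact_mod_cast hN
  set d : ℝ := (M:ℝ) - N with hdd
  have hd0 : (0:ℝ) < d := lt_of_lt_of_le one_pos hd
  have hc0 : (0:ℝ) < c - 1 := by linarith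
  have hden : (0:ℝ) < 1 + (c - 1) / d := by positivity
  have hden2 : (0:ℝ) < d + (c - 1) := by linarith
  have e1 : (1 - (c - 1) / d) / (1 + (c - 1) / d) = (d - (c - 1)) / (d + (c - 1)) := by
    rw [div_eq_div_iff hden.ne' hden2.ne']
    field_simp
  rw [e1, div_le_div_iff₀ hden2 h₄]
  -- P, Q setup
  have hQ : (0:ℝ) < R₃ * (2 * (M:ℝ) + 2 - c) - R₁ * (2 * (N:ℝ) + c) := by
    nlinarith [mul_le_mul_of_nonneg_right h31 (by linarith : (0:ℝ) ≤ 2 * (N:ℝ) + c)]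
  have hPQ : R₂ * (R₁ * (2 * (M:ℝ) + c) - R₃ * (2 * (N:ℝ) + 2 - c))
      = R₄ * (R₃ * (2 * (M:ℝ) + 2 - c) - R₁ * (2 * (N:ℝ) + c)) := by linarith [hsq]
  have hP : (0:ℝ) < R₁ * (2 * (M:ℝ) + c) - R₃ * (2 * (N:ℝ) + 2 - c) := by
    have h : 0 < R₂ * (R₁ * (2 * (M:ℝ) + c) - R₃ * (2 * (N:ℝ) + 2 - c)) := by
      rw [hPQ]; positivity
    rcases mul_pos_iff.1 h with ⟨_, hb⟩ | ⟨ha, _⟩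
    · exact hb
    · linarith
  have hA : (0:ℝ) ≤ (R₃ - R₁) * ((2 * (M:ℝ) + 2 - c) * (d + c - 1) + (2 * (N:ℝ) + 2 - c) * (d - c + 1)) := by
    apply mul_nonneg (by linarith)
    have : (0:ℝ) < d - c + 1 := by linarith
    nlinarith
  -- key : Q*(d+c-1) - P*(d-c+1) = (R₃-R₁)*A  ≥ 0
  have key : (R₃ * (2 * (M:ℝ) + 2 - c) - R₁ * (2 * (N:ℝ) + c)) * (d + c - 1)
      - (R₁ * (2 * (M:ℝ) + c) - R₃ * (2 * (N:ℝ) + 2 - c)) * (d - c + 1)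
      = (R₃ - R₁) * ((2 * (M:ℝ) + 2 - c) * (d + c - 1) + (2 * (N:ℝ) + 2 - c) * (d - c + 1)) := by
    simp only [hdd]; ring
  -- multiply goal by P
  have hmul : R₄ * ((R₃ * (2 * (M:ℝ) + 2 - c) - R₁ * (2 * (N:ℝ) + c)) * (d + c - 1)
      - (R₁ * (2 * (M:ℝ) + c) - R₃ * (2 * (N:ℝ) + 2 - c)) * (d - c + 1)) ≥ 0 := by
    rw [key]; exact mul_nonneg h₄.le hA
  have step : (R₂ * (d + (c - 1)) - (d - (c - 1)) * R₄)
        * (R₁ * (2 * (M:ℝ) + c) - R₃ * (2 * (N:ℝ) + 2 - c))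
      = R₄ * ((R₃ * (2 * (M:ℝ) + 2 - c) - R₁ * (2 * (N:ℝ) + c)) * (d + c - 1)
        - (R₁ * (2 * (M:ℝ) + c) - R₃ * (2 * (N:ℝ) + 2 - c)) * (d - c + 1)) := by
    linear_combination (d + c - 1) * hPQ
  have h0 : (0:ℝ) * (R₁ * (2 * (M:ℝ) + c) - R₃ * (2 * (N:ℝ) + 2 - c))
      ≤ (R₂ * (d + (c - 1)) - (d - (c - 1)) * R₄)
        * (R₁ * (2 * (M:ℝ) + c) - R₃ * (2 * (N:ℝ) + 2 - c)) := by
    rw [zero_mul, step]; exact hmul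
  have := le_of_mul_le_mul_right h0 hP
  linarith
end

section
/- Let c ∈ (1,2) and let X, Y: 𝕍 → [-1,1] be the solution of the system (M-N)·(X(N,M)+Y(N,M+1))/(1-X(N,M)Y(N,M+1)) + (M+N)·(X(N,M)-Y(N,M))/(1+X(N,M)Y(N,M)) = 0 and (M-N)·(Y(N,M+1)-X(N,M))/(1-X(N,M)Y(N,M+1)) + (M+N+1)·(X(N,M+1)+Y(N,M+1))/(1+X(N,M+1)Y(N,M+1)) = c-1 corresponding to discrete Z^c (so that the sign conditions of Lemma 1 hold). Then for all (N,M) ∈ 𝕍 with M > |N|: -(c-1)/(M-N) ≤ X(N,M) ≤ (c-1)/(M+N) and 0 ≤ Y(N,M+1) ≤ (c-1)/(M+N) + 2(c-1)/(M-N). -/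
private lemma stmt8_lt (x r : ℝ) (h1 : -1 ≤ x) (h2 : x ≤ 1) (hr : 0 < r)
    (h : (1 + x) / (1 - x) = r) : -1 < x ∧ x < 1 := by
  constructor
  · rcases h1.lt_or_eq with h' | h'
    · exact h'
    · exfalso; rw [← h'] at h; norm_num at h; linarith
  · rcases h2.lt_or_eq with h' | h'
    · exact h'
    · exfalso; rw [h'] at h; norm_num at h; linarith

private lemma stmt8_le (x y : ℝ) (hx : x < 1) (hy : y < 1)
    (h : (1 + x) / (1 - x) ≤ (1 + y) / (1 - y)) : x ≤ y := by
  rw [div_le_div_iff₀ (by linarith) (by linarith)] at h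
  nlinarith

private lemma stmt8_sum (x y : ℝ) (hx : x ≤ 1) (hy : y ≤ 1)
    (h : 1 ≤ (1 + x) / (1 - x) * ((1 + y) / (1 - y))) : 0 ≤ x + y := by
  by_cases hx1 : x = 1
  · subst hx1; norm_num at h
  by_cases hy1 : y = 1
  · subst hy1; norm_num at h
  have hx' : x < 1 := lt_of_le_of_ne hx hx1
  have hy' : y < 1 := lt_of_le_of_ne hy hy1
  rw [div_mul_div_comm, le_div_iff₀ (by nlinarith)] at h
  nlinarith

private lemma stmt8_den (x y : ℝ) (hx1 : -1 < x) (hx2 : x < 1)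
    (hy1 : -1 ≤ y) (hy2 : y ≤ 1) : 0 < 1 + x * y ∧ 0 < 1 - x * y := by
  constructor
  · nlinarith [sq_nonneg (x + y), mul_nonneg (by linarith : (0:ℝ) ≤ 1 - y) (by linarith : (0:ℝ) ≤ 1 + y), mul_pos (by linarith : (0:ℝ) < 1 - x) (by linarith : (0:ℝ) < 1 + x)]
  · nlinarith [sq_nonneg (x - y), mul_nonneg (by linarith : (0:ℝ) ≤ 1 - y) (by linarith : (0:ℝ) ≤ 1 + y), mul_pos (by linarith : (0:ℝ) < 1 - x) (by linarith : (0:ℝ) < 1 + x)]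

set_option maxHeartbeats 1000000 in
/-- Lemma 1 of the paper: the estimates
`-(c-1)/(M-N) ≤ X(N,M) ≤ (c-1)/(M+N)` and
`0 ≤ Y(N,M+1) ≤ (c-1)/(M+N) + 2(c-1)/(M-N)` for the solution of the
system (Ri-t), (square-t) corresponding to discrete `Z^c`, `1 < c < 2`. -/
theorem stmt8 (c : ℝ) (hc1 : 1 < c) (hc2 : c < 2)
    (R : ℤ → ℤ → ℝ)
    (hpos : ∀ N M : ℤ, |N| ≤ M → 0 < R N M)
    (h1 : ∀ N M : ℤ, |N| ≤ M → R N M ^ 2 ≤ R (N + 1) M * R N (M + 1))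
    (h2 : ∀ N M : ℤ, |N| ≤ M - 1 → R N M ^ 2 ≥ R (N + 1) M * R N (M - 1))
    (h3 : ∀ N M : ℤ, |N| ≤ M → R (N + 1) (M + 1) ^ 2 ≥ R (N + 1) M * R N (M + 1))
    (h4 : ∀ N M : ℤ, |N| ≤ M → R N (M + 1) ^ 2 ≥ R N M * R (N + 1) (M + 1))
    (h5 : ∀ N M : ℤ, |N| ≤ M → R (N + 1) M ^ 2 ≤ R N M * R (N + 1) (M + 1))
    (X Y : ℤ → ℤ → ℝ)
    (hXrange : ∀ N M : ℤ, -1 ≤ X N M ∧ X N M ≤ 1)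
    (hYrange : ∀ N M : ℤ, -1 ≤ Y N M ∧ Y N M ≤ 1)
    (hX : ∀ N M : ℤ, |N| ≤ M → (1 + X N M) / (1 - X N M) = R (N + 1) M / R N M)
    (hY : ∀ N M : ℤ, |N| ≤ M - 1 → (1 + Y N M) / (1 - Y N M) = R N M / R N (M - 1))
    (hRit : ∀ N M : ℤ, |N| ≤ M →
      ((M : ℝ) - N) * (X N M + Y N (M + 1)) / (1 - X N M * Y N (M + 1))
        + ((M : ℝ) + N) * (X N M - Y N M) / (1 + X N M * Y N M) = 0)
    (hsqt : ∀ N M : ℤ, |N| ≤ M →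
      ((M : ℝ) - N) * (Y N (M + 1) - X N M) / (1 - X N M * Y N (M + 1))
        + ((M : ℝ) + N + 1) * (X N (M + 1) + Y N (M + 1))
            / (1 + X N (M + 1) * Y N (M + 1)) = c - 1) :
    ∀ N M : ℤ, |N| < M →
      (-(c - 1) / ((M : ℝ) - N) ≤ X N M ∧ X N M ≤ (c - 1) / ((M : ℝ) + N)) ∧
      (0 ≤ Y N (M + 1) ∧
        Y N (M + 1) ≤ (c - 1) / ((M : ℝ) + N) + 2 * (c - 1) / ((M : ℝ) - N)) := by
  -- strict bounds on X
  have hXlt : ∀ N M : ℤ, |N| ≤ M → |N + 1| ≤ M → -1 < X N M ∧ X N M < 1 := by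
    intro N M h h'
    exact stmt8_lt _ _ (hXrange N M).1 (hXrange N M).2
      (div_pos (hpos (N + 1) M h') (hpos N M h)) (hX N M h)
  -- strict bounds on Y
  have hYlt : ∀ N M : ℤ, |N| ≤ M - 1 → -1 < Y N M ∧ Y N M < 1 := by
    intro N M h
    obtain ⟨hn2, hn1⟩ := abs_le.mp h
    exact stmt8_lt _ _ (hYrange N M).1 (hYrange N M).2
      (div_pos (hpos N M (abs_le.mpr (by omega))) (hpos N (M - 1) (abs_le.mpr (by omega))))
      (hY N M h)
  -- fact1 : 0 ≤ X(N,M) + Y(N,M+1)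
  have fact1 : ∀ N M : ℤ, |N| ≤ M → 0 ≤ X N M + Y N (M + 1) := by
    intro N M h
    obtain ⟨hn2, hn1⟩ := abs_le.mp h
    have e1 := hX N M h
    have e2 := hY N (M + 1) (abs_le.mpr (by omega))
    rw [show M + 1 - 1 = M from by ring] at e2
    apply stmt8_sum _ _ (hXrange N M).2 (hYrange N (M + 1)).2
    rw [e1, e2, div_mul_div_comm, le_div_iff₀ (mul_pos (hpos N M h) (hpos N M h))]
    nlinarith [h1 N M h]
  -- fact3 : X(N,M+1) ≤ Y(N,M+1)
  have fact3 : ∀ N M : ℤ, |N| ≤ M → X N (M + 1) ≤ Y N (M + 1) := by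
    intro N M h
    obtain ⟨hn2, hn1⟩ := abs_le.mp h
    have e1 := hX N (M + 1) (abs_le.mpr (by omega))
    have e2 := hY N (M + 1) (abs_le.mpr (by omega))
    rw [show M + 1 - 1 = M from by ring] at e2
    have hXs := hXlt N (M + 1) (abs_le.mpr (by omega)) (abs_le.mpr (by omega))
    have hYs := hYlt N (M + 1) (abs_le.mpr (by omega))
    apply stmt8_le _ _ hXs.2 hYs.2
    rw [e1, e2, div_le_div_iff₀ (hpos N (M + 1) (abs_le.mpr (by omega))) (hpos N M h)]
    nlinarith [h4 N M h]
  -- fact4 : 0 ≤ X(N,M+1) + Y(N,M+1)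
  have fact4 : ∀ N M : ℤ, |N| ≤ M → 0 ≤ X N (M + 1) + Y N (M + 1) := by
    intro N M h
    obtain ⟨hn2, hn1⟩ := abs_le.mp h
    have e1 := hX N (M + 1) (abs_le.mpr (by omega))
    have e2 := hY N (M + 1) (abs_le.mpr (by omega))
    rw [show M + 1 - 1 = M from by ring] at e2
    have hR : R N M ≤ R (N + 1) (M + 1) := by
      nlinarith [h1 N M h, h3 N M h, hpos N M h, hpos (N + 1) (M + 1) (abs_le.mpr (by omega)),
        sq_nonneg (R N M - R (N + 1) (M + 1)), sq_nonneg (R N M + R (N + 1) (M + 1))]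
    apply stmt8_sum _ _ (hXrange N (M + 1)).2 (hYrange N (M + 1)).2
    rw [e1, e2, div_mul_div_comm, le_div_iff₀ (mul_pos (hpos N (M + 1) (abs_le.mpr (by omega))) (hpos N M h))]
    nlinarith [hpos N (M + 1) (abs_le.mpr (by omega)), hR]
  -- fact5 : X(N,M) ≤ Y(N,M+1)
  have fact5 : ∀ N M : ℤ, |N| ≤ M → |N + 1| ≤ M → X N M ≤ Y N (M + 1) := by
    intro N M h h'
    obtain ⟨hn2, hn1⟩ := abs_le.mp h
    have e1 := hX N M h
    have e2 := hY N (M + 1) (abs_le.mpr (by omega))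
    rw [show M + 1 - 1 = M from by ring] at e2
    have hXs := hXlt N M h h'
    have hYs := hYlt N (M + 1) (abs_le.mpr (by omega))
    have hR : R (N + 1) M ≤ R N (M + 1) := by
      nlinarith [h4 N M h, h5 N M h, hpos N (M + 1) (abs_le.mpr (by omega)),
        sq_nonneg (R (N + 1) M - R N (M + 1)), sq_nonneg (R (N + 1) M + R N (M + 1))]
    apply stmt8_le _ _ hXs.2 hYs.2
    rw [e1, e2, div_le_div_iff₀ (hpos N M h) (hpos N M h)]
    nlinarith [hpos N M h, hR]
  -- nonnegativity of Y
  have Ynn : ∀ N M : ℤ, |N| ≤ M - 1 → 0 ≤ Y N M := by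
    intro N M h
    obtain ⟨hn2, hn1⟩ := abs_le.mp h
    by_contra hneg
    push_neg at hneg
    have hs := hsqt N (M - 1) (abs_le.mpr (by omega))
    rw [show M - 1 + 1 = M from by ring] at hs
    push_cast at hs
    have hf1 := fact1 N (M - 1) (abs_le.mpr (by omega))
    rw [show M - 1 + 1 = M from by ring] at hf1
    have hf3 := fact3 N (M - 1) (abs_le.mpr (by omega))
    rw [show M - 1 + 1 = M from by ring] at hf3
    have hx' : 0 < X N (M - 1) := by linarith
    have hxm : X N M < 0 := lt_of_le_of_lt hf3 hneg
    have hd1 : (0:ℝ) < 1 - X N (M - 1) * Y N M := by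
      nlinarith [mul_nonneg hx'.le (show (0:ℝ) ≤ -Y N M by linarith)]
    have hd2 : (0:ℝ) < 1 + X N M * Y N M := by
      have := mul_pos_of_neg_of_neg hxm hneg; linarith
    have hco1 : (0:ℝ) ≤ (M:ℝ) - 1 - N := by
      have : ((N:ℤ):ℝ) ≤ ((M - 1 : ℤ):ℝ) := Int.cast_le.mpr (by omega)
      push_cast at this; linarith
    have hco2 : (0:ℝ) < (M:ℝ) - 1 + N + 1 := by
      have : ((-M + 1 : ℤ):ℝ) ≤ ((N:ℤ):ℝ) := Int.cast_le.mpr (by omega)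
      push_cast at this; linarith
    have hmul1 : ((M:ℝ) - 1 - N) * (Y N M - X N (M - 1)) ≤ 0 := by
      nlinarith [mul_nonneg hco1 (show (0:ℝ) ≤ X N (M - 1) - Y N M by linarith)]
    have ht1 : ((M:ℝ) - 1 - N) * (Y N M - X N (M - 1)) / (1 - X N (M - 1) * Y N M) ≤ 0 :=
      div_nonpos_of_nonpos_of_nonneg hmul1 hd1.le
    have ht2 : ((M:ℝ) - 1 + N + 1) * (X N M + Y N M) / (1 + X N M * Y N M) < 0 :=
      div_neg_of_neg_of_pos (mul_neg_of_pos_of_neg hco2 (by linarith)) hd2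
    linarith
  -- main
  intro N M hNM
  have hn1 : N < M := lt_of_abs_lt hNM
  have hn2 : -M < N := neg_lt_of_abs_lt hNM
  have hMNR : (0:ℝ) < (M:ℝ) - N := by
    have : ((N:ℤ):ℝ) < ((M:ℤ):ℝ) := Int.cast_lt.mpr hn1
    linarith
  have hMPR : (0:ℝ) < (M:ℝ) + N := by
    have : ((-M:ℤ):ℝ) < ((N:ℤ):ℝ) := Int.cast_lt.mpr hn2
    push_cast at this; linarith
  have hXs := hXlt N M (abs_le.mpr (by omega)) (abs_le.mpr (by omega))
  have hXs1 := hXlt N (M + 1) (abs_le.mpr (by omega)) (abs_le.mpr (by omega))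
  have hYr := hYrange N (M + 1)
  have hYnn' : 0 ≤ Y N (M + 1) := Ynn N (M + 1) (abs_le.mpr (by omega))
  have hYnn : 0 ≤ Y N M := Ynn N M (abs_le.mpr (by omega))
  -- denominators at (N, M)
  have hd : (0:ℝ) < 1 - X N M * Y N (M + 1) :=
    (stmt8_den (X N M) (Y N (M + 1)) hXs.1 hXs.2 hYr.1 hYr.2).2
  have hd4 : (0:ℝ) < 1 + X N (M + 1) * Y N (M + 1) :=
    (stmt8_den (X N (M + 1)) (Y N (M + 1)) hXs1.1 hXs1.2 hYr.1 hYr.2).1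
  have hd2 : (0:ℝ) < 1 + X N M * Y N M :=
    (stmt8_den (X N M) (Y N M) hXs.1 hXs.2 (hYrange N M).1 (hYrange N M).2).1
  -- the equation at (N, M)
  have hs0 := hsqt N M (abs_le.mpr (by omega))
  have hB0 : 0 ≤ ((M:ℝ) + N + 1) * (X N (M + 1) + Y N (M + 1)) / (1 + X N (M + 1) * Y N (M + 1)) :=
    div_nonneg (mul_nonneg (by linarith) (fact4 N M (abs_le.mpr (by omega)))) hd4.le
  have hA0 : ((M:ℝ) - N) * (Y N (M + 1) - X N M) / (1 - X N M * Y N (M + 1)) ≤ c - 1 := by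
    linarith
  rw [mul_div_assoc] at hA0
  -- upper bound on X via the equation at (N, M-1)
  have hXub : X N M ≤ (c - 1) / ((M:ℝ) + N) := by
    have hs := hsqt N (M - 1) (abs_le.mpr (by omega))
    rw [show M - 1 + 1 = M from by ring] at hs
    push_cast at hs
    have hA' : 0 ≤ ((M:ℝ) - 1 - N) * (Y N M - X N (M - 1)) / (1 - X N (M - 1) * Y N M) := by
      rcases eq_or_lt_of_le (show N ≤ M - 1 by omega) with he | hlt
      · have hz : ((M:ℝ) - 1 - N) = 0 := by
          have : ((N:ℤ):ℝ) = ((M - 1 : ℤ):ℝ) := by exact_mod_cast congrArg (Int.cast : ℤ → ℝ) he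
          push_cast at this; linarith
        rw [hz, zero_mul, zero_div]
      · have hnum := fact5 N (M - 1) (abs_le.mpr (by omega)) (abs_le.mpr (by omega))
        rw [show M - 1 + 1 = M from by ring] at hnum
        have hXs' := hXlt N (M - 1) (abs_le.mpr (by omega)) (abs_le.mpr (by omega))
        have hd' : (0:ℝ) < 1 - X N (M - 1) * Y N M :=
          (stmt8_den (X N (M - 1)) (Y N M) hXs'.1 hXs'.2 (hYrange N M).1 (hYrange N M).2).2
        have hco : (0:ℝ) ≤ (M:ℝ) - 1 - N := by
          have : ((N:ℤ):ℝ) ≤ ((M - 1 : ℤ):ℝ) := Int.cast_le.mpr (by omega)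
          push_cast at this; linarith
        exact div_nonneg (mul_nonneg hco (by linarith)) hd'.le
    have hB' : ((M:ℝ) - 1 + N + 1) * (X N M + Y N M) / (1 + X N M * Y N M) ≤ c - 1 := by
      linarith
    have hXY : X N M ≤ (X N M + Y N M) / (1 + X N M * Y N M) := by
      rw [le_div_iff₀ hd2]
      nlinarith [mul_nonneg hYnn (mul_nonneg (show (0:ℝ) ≤ 1 - X N M by linarith [hXs.2])
        (show (0:ℝ) ≤ 1 + X N M by linarith [hXs.1]))]
    have hmul := mul_le_mul_of_nonneg_left hXY hMPR.le
    rw [mul_div_assoc] at hB'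
    rw [le_div_iff₀ hMPR]
    linarith only [hmul, hB']
  -- lower bound on X
  have hkey : -X N M ≤ (Y N (M + 1) - X N M) / (1 - X N M * Y N (M + 1)) := by
    rw [le_div_iff₀ hd]
    nlinarith [mul_nonneg hYnn' (mul_nonneg (show (0:ℝ) ≤ 1 - X N M by linarith [hXs.2])
      (show (0:ℝ) ≤ 1 + X N M by linarith [hXs.1]))]
  have hXlb : -(c - 1) / ((M:ℝ) - N) ≤ X N M := by
    have hmul := mul_le_mul_of_nonneg_left hkey hMNR.le
    rw [neg_div, neg_le, le_div_iff₀ hMNR]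
    linarith only [hmul, hA0]
  -- upper bound on Y
  have hYub : Y N (M + 1) ≤ (c - 1) / ((M:ℝ) + N) + 2 * (c - 1) / ((M:ℝ) - N) := by
    by_cases hyx : Y N (M + 1) ≤ X N M
    · have h2n : (0:ℝ) ≤ 2 * (c - 1) / ((M:ℝ) - N) := div_nonneg (by linarith) hMNR.le
      linarith
    · push_neg at hyx
      have hle2 : (1:ℝ) - X N M * Y N (M + 1) ≤ 2 := by
        nlinarith [mul_nonneg (show (0:ℝ) ≤ 1 + X N M by linarith [hXs.1])
          (show (0:ℝ) ≤ 1 + Y N (M + 1) by linarith [hYr.1]),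
          mul_nonneg (show (0:ℝ) ≤ 1 - X N M by linarith [hXs.2])
          (show (0:ℝ) ≤ 1 - Y N (M + 1) by linarith [hYr.2])]
      have hq : (Y N (M + 1) - X N M) / 2 ≤ (Y N (M + 1) - X N M) / (1 - X N M * Y N (M + 1)) := by
        rw [div_le_div_iff₀ (by norm_num : (0:ℝ) < 2) hd]
        nlinarith [mul_nonneg (show (0:ℝ) ≤ Y N (M + 1) - X N M by linarith)
          (show (0:ℝ) ≤ 2 - (1 - X N M * Y N (M + 1)) by linarith)]
      have hmul := mul_le_mul_of_nonneg_left hq hMNR.le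
      have h7 : Y N (M + 1) - X N M ≤ 2 * (c - 1) / ((M:ℝ) - N) := by
        rw [le_div_iff₀ hMNR]
        linarith only [hmul, hA0]
      linarith
  exact ⟨⟨hXlb, hXub⟩, ⟨hYnn', hYub⟩⟩
end

section
/- Let 0 < λ < 1 and let (a_n) satisfy a_{n+1} = λ a_n + K/n + r_n where |r_n| ≤ G/n² for all n ≥ 1, for constants K, G. Then a_n = K/((1-λ)n) + O(1/n²) as n → ∞; i.e., there is a constant C with |a_n - K/((1-λ)n)| ≤ C/n² for all n ≥ 1. -/
/-- Stable component: if `a_{n+1} = λ a_n + K/n + r_n` with `0 < λ < 1` and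
`|r_n| ≤ G/n²`, then `a_n = K/((1-λ)n) + O(1/n²)`. -/
theorem stmt10 (lam K G : ℝ) (hlam0 : 0 < lam) (hlam1 : lam < 1)
    (a r : ℕ → ℝ)
    (hrec : ∀ n : ℕ, 1 ≤ n → a (n + 1) = lam * a n + K / n + r n)
    (hr : ∀ n : ℕ, 1 ≤ n → |r n| ≤ G / (n : ℝ) ^ 2) :
    ∃ C : ℝ, ∀ n : ℕ, 1 ≤ n →
      |a n - K / ((1 - lam) * n)| ≤ C / (n : ℝ) ^ 2 := by
  have h1l : 0 < 1 - lam := by linarith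
  set b : ℕ → ℝ := fun n => a n - K / ((1 - lam) * n) with hb
  have hG : 0 ≤ G := by
    have h := hr 1 le_rfl
    have h0 := abs_nonneg (r 1)
    simp at h
    linarith
  set H : ℝ := G + |K| / (1 - lam) with hH
  have hH0 : 0 ≤ H := by positivity
  -- key recursion estimate
  have key : ∀ n : ℕ, 1 ≤ n → |b (n + 1)| ≤ lam * |b n| + H / (n : ℝ) ^ 2 := by
    intro n hn
    have hn1 : (1 : ℝ) ≤ (n : ℝ) := by exact_mod_cast hn
    have hnpos : (0 : ℝ) < n := by linarith
    have e : b (n + 1) = lam * b n + r n + K / ((1 - lam) * n * (n + 1)) := by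
      simp only [hb]
      rw [hrec n hn]
      push_cast
      field_simp
      ring
    have hd : (0 : ℝ) < (1 - lam) * n * (n + 1) :=
      mul_pos (mul_pos h1l hnpos) (by linarith)
    have h1 : |b (n + 1)| ≤ lam * |b n| + |r n| + |K| / ((1 - lam) * n * (n + 1)) := by
      rw [e]
      calc |lam * b n + r n + K / ((1 - lam) * n * (n + 1))|
          ≤ |lam * b n| + |r n| + |K / ((1 - lam) * n * (n + 1))| := abs_add_three _ _ _
        _ = lam * |b n| + |r n| + |K| / ((1 - lam) * n * (n + 1)) := by
            rw [abs_mul, abs_of_pos hlam0, abs_div, abs_of_pos hd]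
    have h2 : |K| / ((1 - lam) * n * (n + 1)) ≤ (|K| / (1 - lam)) / (n : ℝ) ^ 2 := by
      rw [div_div]
      apply div_le_div_of_nonneg_left (abs_nonneg K) (by positivity)
      nlinarith
    have h3 : |r n| ≤ G / (n : ℝ) ^ 2 := hr n hn
    have : H / (n : ℝ) ^ 2 = G / (n : ℝ) ^ 2 + (|K| / (1 - lam)) / (n : ℝ) ^ 2 := by
      rw [hH]; ring
    rw [this]
    linarith
  -- threshold
  obtain ⟨N, hN1, hN6⟩ : ∃ N : ℕ, 1 ≤ N ∧ (6 : ℝ) ≤ (1 - lam) * N := by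
    obtain ⟨N, hN⟩ := exists_nat_ge (6 / (1 - lam))
    refine ⟨N + 1, Nat.le_add_left 1 N, ?_⟩
    have : (6 : ℝ) / (1 - lam) ≤ (N + 1 : ℕ) := by push_cast; linarith
    calc (6 : ℝ) = (1 - lam) * (6 / (1 - lam)) := by field_simp
      _ ≤ (1 - lam) * ((N + 1 : ℕ) : ℝ) := by gcongr
  set C1 : ℝ := max ((N : ℝ) ^ 2 * |b N|) (8 * H / (1 - lam)) with hC1
  have hC10 : 0 ≤ C1 := le_trans (by positivity) (le_max_right _ _)
  -- tail induction
  have tail : ∀ n : ℕ, N ≤ n → |b n| ≤ C1 / (n : ℝ) ^ 2 := by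
    intro n hn
    induction n, hn using Nat.le_induction with
    | base =>
        have hNpos : (0 : ℝ) < (N : ℝ) ^ 2 := by positivity
        rw [le_div_iff₀ hNpos]
        calc |b N| * (N : ℝ) ^ 2 = (N : ℝ) ^ 2 * |b N| := by ring
          _ ≤ C1 := le_max_left _ _
    | succ n hn ih =>
        have hn1 : 1 ≤ n := le_trans hN1 hn
        have hnr : (1 : ℝ) ≤ (n : ℝ) := by exact_mod_cast hn1
        have hNn : ((N : ℝ)) ≤ (n : ℝ) := by exact_mod_cast hn
        have hn6 : (6 : ℝ) ≤ (1 - lam) * n := by nlinarith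
        have hC : 8 * H ≤ (1 - lam) * C1 := by
          have h := le_max_right ((N : ℝ) ^ 2 * |b N|) (8 * H / (1 - lam))
          rw [div_le_iff₀ h1l, ← hC1] at h
          calc 8 * H ≤ C1 * (1 - lam) := h
            _ = (1 - lam) * C1 := mul_comm _ _
        have h1 := key n hn1
        have h2 : lam * (C1 / (n : ℝ) ^ 2) + H / (n : ℝ) ^ 2 ≤ C1 / ((n : ℝ) + 1) ^ 2 := by
          have e2 : lam * (C1 / (n : ℝ) ^ 2) + H / (n : ℝ) ^ 2
              = (lam * C1 + H) / (n : ℝ) ^ 2 := by ring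
          have hnp : (0 : ℝ) < (n : ℝ) ^ 2 := by positivity
          have hn0 : (0 : ℝ) ≤ (n : ℝ) := by linarith
          rw [e2, div_le_div_iff₀ hnp (by positivity)]
          nlinarith [mul_le_mul_of_nonneg_right hC (le_of_lt hnp),
            mul_le_mul_of_nonneg_right hn6 (mul_nonneg hC10 hn0),
            mul_nonneg (mul_nonneg hH0 hn0) hn0, mul_nonneg hH0 hn0,
            mul_nonneg hC10 hn0, mul_nonneg (mul_nonneg hC10 hn0) hn0,
            mul_nonneg (mul_nonneg hH0 hn0) (by linarith : (0:ℝ) ≤ (n:ℝ) - 1),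
            mul_nonneg hH0 (by linarith : (0:ℝ) ≤ (n:ℝ) - 1)]
        have h3 : lam * |b n| ≤ lam * (C1 / (n : ℝ) ^ 2) := by
          exact mul_le_mul_of_nonneg_left ih (le_of_lt hlam0)
        have : ((n : ℝ) + 1) = ((n + 1 : ℕ) : ℝ) := by push_cast; ring
        calc |b (n + 1)| ≤ lam * |b n| + H / (n : ℝ) ^ 2 := h1
          _ ≤ lam * (C1 / (n : ℝ) ^ 2) + H / (n : ℝ) ^ 2 := by linarith
          _ ≤ C1 / ((n : ℝ) + 1) ^ 2 := h2
          _ = C1 / ((n + 1 : ℕ) : ℝ) ^ 2 := by rw [this]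
  -- small values
  have hne : (Finset.Icc 1 N).Nonempty := ⟨1, by simp [hN1]⟩
  set M : ℝ := (Finset.Icc 1 N).sup' hne (fun n => (n : ℝ) ^ 2 * |b n|) with hM
  refine ⟨max C1 M, fun n hn => ?_⟩
  have hnr : (0 : ℝ) < (n : ℝ) ^ 2 := by
    have : (1 : ℝ) ≤ (n : ℝ) := by exact_mod_cast hn
    positivity
  by_cases hcase : N ≤ n
  · calc |b n| ≤ C1 / (n : ℝ) ^ 2 := tail n hcase
      _ ≤ max C1 M / (n : ℝ) ^ 2 := by gcongr; exact le_max_left _ _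
  · have hmem : n ∈ Finset.Icc 1 N := by
      simp [Finset.mem_Icc]
      exact ⟨hn, le_of_not_ge hcase⟩
    have : (n : ℝ) ^ 2 * |b n| ≤ M := Finset.le_sup' (fun n : ℕ => (n : ℝ) ^ 2 * |b n|) hmem
    rw [le_div_iff₀ hnr]
    calc |b n| * (n : ℝ) ^ 2 = (n : ℝ) ^ 2 * |b n| := by ring
      _ ≤ M := this
      _ ≤ max C1 M := le_max_right _ _
end

section
/- Let 0 < λ < 1. Then the sum S_n = Σ_{k=1}^{n-1} λ^{n-1-k}/k satisfies S_n = 1/((1-λ)n) + O(1/n²); more precisely there exists a constant C(λ) such that |S_n - 1/((1-λ)n)| ≤ C(λ)/n² for all n ≥ 2. -/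
/-!
Write `n = N + 1` and reverse the sum to `Σ_{j<N} λ^j / (N - j)`. Replacing each `1/(N - j)` by
`1/n` leaves the geometric sum `(1 - λ^N) / ((1 - λ) n)`, whose defect `λ^N / ((1 - λ) n)` is
`O(1/n²)` because `n λ^N ≤ 1/(1 - λ)`. The replacement costs `λ^j (j + 1) / ((N - j) n)`, which
is at most `2 (j + 1)² λ^j / n²` as `(N - j)(j + 1) ≥ n/2`; these errors are dominated by the
convergent series `Σ (j + 1)² λ^j`.
-/

open Finset

lemma sum_Icc_one_eq_sum_range_sub {M : Type*} [AddCommMonoid M] (f : ℕ → M) (N : ℕ) :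
    ∑ k ∈ Icc 1 N, f k = ∑ j ∈ range N, f (N - j) := by
  rw [range_eq_Ico, sum_Ico_reflect f 0 N.le_succ, Nat.add_sub_cancel_left, Nat.sub_zero,
    Ico_add_one_right_eq_Icc]

lemma sum_Icc_one_pow_sub_div_eq (r : ℝ) (N : ℕ) :
    ∑ k ∈ Icc 1 N, r ^ (N - k) / (k : ℝ) = ∑ j ∈ range N, r ^ j / ((N : ℝ) - j) := by
  rw [sum_Icc_one_eq_sum_range_sub]
  refine sum_congr rfl fun j hj => ?_
  have hjN : j ≤ N := (mem_range.1 hj).le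
  rw [Nat.sub_sub_self hjN, Nat.cast_sub hjN]

lemma add_one_mul_pow_le {r : ℝ} (h0 : 0 ≤ r) (h1 : r < 1) (m : ℕ) :
    ((m : ℝ) + 1) * r ^ m ≤ (1 - r)⁻¹ :=
  calc ((m : ℝ) + 1) * r ^ m = ∑ _i ∈ range (m + 1), r ^ m := by simp
    _ ≤ ∑ i ∈ range (m + 1), r ^ i :=
      sum_le_sum fun i hi => pow_le_pow_of_le_one h0 h1.le (Nat.lt_succ_iff.1 (mem_range.1 hi))
    _ ≤ (1 - r)⁻¹ := by
      simpa [← Nat.Ico_zero_eq_range] using geom_sum_Ico_le_of_lt_one (m := 0) (n := m + 1) h0 h1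

lemma summable_add_one_sq_mul_pow {r : ℝ} (h : ‖r‖ < 1) :
    Summable fun j : ℕ => ((j : ℝ) + 1) ^ 2 * r ^ j := by
  have h2 := summable_pow_mul_geometric_of_norm_lt_one 2 h
  have h1 := summable_pow_mul_geometric_of_norm_lt_one 1 h
  have h0 := summable_pow_mul_geometric_of_norm_lt_one 0 h
  exact (h2.add ((h1.mul_left 2).add h0)).congr fun j => by ring

lemma inv_sub_inv_add_le {a b : ℝ} (ha : 1 ≤ a) (hb : 1 ≤ b) :
    a⁻¹ - (a + b)⁻¹ ≤ 2 * b ^ 2 / (a + b) ^ 2 := by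
  have hab : a + b ≤ 2 * a * b := by nlinarith
  rw [inv_sub_inv (by positivity) (by positivity), add_sub_cancel_left,
    div_le_div_iff₀ (by positivity) (by positivity)]
  calc b * (a + b) ^ 2 = b * (a + b) * (a + b) := by ring
    _ ≤ b * (a + b) * (2 * a * b) := by gcongr
    _ = 2 * b ^ 2 * (a * (a + b)) := by ring

lemma sum_pow_div_sub_eq {r : ℝ} (h1 : r < 1) (N : ℕ) :
    ∑ j ∈ range N, r ^ j / ((N : ℝ) - j) - 1 / ((1 - r) * (N + 1)) =
      ∑ j ∈ range N, r ^ j * (((N : ℝ) - j)⁻¹ - ((N : ℝ) + 1)⁻¹) -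
        r ^ N / ((1 - r) * (N + 1)) := by
  have hgeom : ∑ j ∈ range N, r ^ j = (1 - r ^ N) / (1 - r) := by
    rw [geom_sum_eq h1.ne, ← neg_div_neg_eq, neg_sub, neg_sub]
  simp only [mul_sub, sum_sub_distrib, ← sum_mul, hgeom, div_eq_mul_inv, one_mul]
  have : 1 - r ≠ 0 := (sub_pos.2 h1).ne'
  field_simp
  ring

lemma sum_pow_mul_inv_sub_inv_nonneg {r : ℝ} (h0 : 0 ≤ r) (N : ℕ) :
    0 ≤ ∑ j ∈ range N, r ^ j * (((N : ℝ) - j)⁻¹ - ((N : ℝ) + 1)⁻¹) := by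
  refine sum_nonneg fun j hj => mul_nonneg (pow_nonneg h0 j) (sub_nonneg.2 ?_)
  have hjN : (j : ℝ) + 1 ≤ N := by exact_mod_cast mem_range.1 hj
  exact inv_anti₀ (by linarith) (by linarith)

lemma sum_pow_mul_inv_sub_inv_le {r : ℝ} (h0 : 0 ≤ r) (N : ℕ) :
    ∑ j ∈ range N, r ^ j * (((N : ℝ) - j)⁻¹ - ((N : ℝ) + 1)⁻¹) ≤
      2 * (∑ j ∈ range N, ((j : ℝ) + 1) ^ 2 * r ^ j) / ((N : ℝ) + 1) ^ 2 := by
  rw [mul_sum, sum_div]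
  refine sum_le_sum fun j hj => ?_
  have hjN : (j : ℝ) + 1 ≤ N := by exact_mod_cast mem_range.1 hj
  have hinv := inv_sub_inv_add_le (a := N - j) (b := j + 1) (by linarith) (by linarith)
  rw [show (N : ℝ) - j + (j + 1) = N + 1 by ring] at hinv
  calc r ^ j * (((N : ℝ) - j)⁻¹ - ((N : ℝ) + 1)⁻¹)
      ≤ r ^ j * (2 * ((j : ℝ) + 1) ^ 2 / ((N : ℝ) + 1) ^ 2) := by gcongr
    _ = 2 * (((j : ℝ) + 1) ^ 2 * r ^ j) / ((N : ℝ) + 1) ^ 2 := by ring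

lemma pow_div_one_sub_mul_le {r : ℝ} (h0 : 0 ≤ r) (h1 : r < 1) (N : ℕ) :
    r ^ N / ((1 - r) * (N + 1)) ≤ ((1 - r) ^ 2)⁻¹ / ((N : ℝ) + 1) ^ 2 := by
  have h1' : 0 < 1 - r := sub_pos.2 h1
  calc r ^ N / ((1 - r) * (N + 1)) = ((N + 1) * r ^ N) / (1 - r) / ((N : ℝ) + 1) ^ 2 := by
        field_simp
    _ ≤ (1 - r)⁻¹ / (1 - r) / ((N : ℝ) + 1) ^ 2 := by gcongr; exact add_one_mul_pow_le h0 h1 N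
    _ = ((1 - r) ^ 2)⁻¹ / ((N : ℝ) + 1) ^ 2 := by field_simp

/-- Summation estimate for the stable direction:
`Σ_{k=1}^{n-1} λ^{n-1-k}/k = 1/((1-λ)n) + O(1/n²)` for `0 < λ < 1`. -/
theorem stmt12 (lam : ℝ) (hlam0 : 0 < lam) (hlam1 : lam < 1) :
    ∃ C : ℝ, ∀ n : ℕ, 2 ≤ n →
      |(∑ k ∈ Finset.Icc 1 (n - 1), lam ^ (n - 1 - k) / (k : ℝ))
          - 1 / ((1 - lam) * n)| ≤ C / (n : ℝ) ^ 2 := by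
  set K := ∑' j : ℕ, ((j : ℝ) + 1) ^ 2 * lam ^ j
  have hK : ∀ N, ∑ j ∈ range N, ((j : ℝ) + 1) ^ 2 * lam ^ j ≤ K := fun N =>
    (summable_add_one_sq_mul_pow (by rwa [Real.norm_of_nonneg hlam0.le])).sum_le_tsum _
      fun j _ => by positivity
  refine ⟨2 * K + ((1 - lam) ^ 2)⁻¹, fun n hn => ?_⟩
  obtain ⟨N, rfl⟩ : ∃ N, n = N + 1 := ⟨n - 1, by omega⟩
  rw [Nat.add_sub_cancel, sum_Icc_one_pow_sub_div_eq, Nat.cast_succ, sum_pow_div_sub_eq hlam1,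
    add_div, abs_sub_le_iff]
  have hE := sum_pow_mul_inv_sub_inv_le hlam0.le N
  have hT := pow_div_one_sub_mul_le hlam0.le hlam1 N
  have hK' : 2 * (∑ j ∈ range N, ((j : ℝ) + 1) ^ 2 * lam ^ j) / ((N : ℝ) + 1) ^ 2 ≤
      2 * K / ((N : ℝ) + 1) ^ 2 := by gcongr; exact hK N
  have hE0 := sum_pow_mul_inv_sub_inv_nonneg hlam0.le N
  have hT0 : 0 ≤ lam ^ N / ((1 - lam) * (N + 1)) := by
    have := sub_pos.2 hlam1
    positivity
  have hC0 : 0 ≤ 2 * K / ((N : ℝ) + 1) ^ 2 := hE0.trans (hE.trans hK')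
  constructor <;> linarith
end
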